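/- Herbrand's theorem for prenex existential formulas: Let G be a quantifier-free first-order formula with free variables among x₁,…,x_k, over a language containing at least one constant symbol. Then the formula ∃x₁.…∃x_k.G is valid if and only if there are finitely many k-tuples of variable-free terms (t₁¹,…,t_k¹), …, (t₁ʳ,…,t_kʳ) of the language such that the disjunction ⋁_{j=1}^{r} G{x₁↦t₁ʲ,…,x_k↦t_kʲ} is sententially valid. -/

import Mathlib

namespace Herbrand

abbrev FSym := Option (ℕ ⊕ ℕ)

inductive Tm : Type where
  | var : ℕ → Tm
  | fn : FSym → List Tm → Tm

inductive Fm : Type where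
  | atom : ℕ → List Tm → Fm
  | neg : Fm → Fm
  | or : Fm → Fm → Fm
  | and : Fm → Fm → Fm
  | all : ℕ → Fm → Fm
  | ex : ℕ → Fm → Fm

mutual
  def Tm.beq : Tm → Tm → Bool
    | .var x, .var y => x == y
    | .fn f ts, .fn g us => f == g && Tm.beqList ts us
    | _, _ => false
  def Tm.beqList : List Tm → List Tm → Bool
    | [], [] => true
    | t :: ts, u :: us => Tm.beq t u && Tm.beqList ts us
    | _, _ => false
end

def Tm.height : Tm → ℕ
  | .var _ => 1
  | .fn _ ts => 1 + ts.attach.foldr (fun ⟨t, _⟩ m => max (Tm.height t) m) 0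

def Tm.varsT : Tm → List ℕ
  | .var x => [x]
  | .fn _ ts => ts.attach.foldr (fun ⟨t, _⟩ l => Tm.varsT t ++ l) []

def Tm.symsT : Tm → List (FSym × ℕ)
  | .var _ => []
  | .fn f ts => (f, ts.length) :: ts.attach.foldr (fun ⟨t, _⟩ l => Tm.symsT t ++ l) []

def Tm.substT (x : ℕ) (u : Tm) : Tm → Tm
  | .var y => if y = x then u else .var y
  | .fn f ts => .fn f (ts.attach.map fun ⟨t, _⟩ => Tm.substT x u t)

/-- A term is over the base language: no Skolem symbols, no bullet. -/
def Tm.isBaseT (t : Tm) : Prop := ∀ p ∈ t.symsT, ∃ k : ℕ, p.1 = some (Sum.inl k)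

def Fm.freeVars : Fm → List ℕ
  | .atom _ ts => ts.flatMap Tm.varsT
  | .neg A => A.freeVars
  | .or A B => A.freeVars ++ B.freeVars
  | .and A B => A.freeVars ++ B.freeVars
  | .all x A => A.freeVars.filter (· ≠ x)
  | .ex x A => A.freeVars.filter (· ≠ x)

def Fm.boundVars : Fm → List ℕ
  | .atom _ _ => []
  | .neg A => A.boundVars
  | .or A B => A.boundVars ++ B.boundVars
  | .and A B => A.boundVars ++ B.boundVars
  | .all x A => x :: A.boundVars
  | .ex x A => x :: A.boundVars

def Fm.symsF : Fm → List (FSym × ℕ)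
  | .atom _ ts => ts.flatMap Tm.symsT
  | .neg A => A.symsF
  | .or A B => A.symsF ++ B.symsF
  | .and A B => A.symsF ++ B.symsF
  | .all _ A => A.symsF
  | .ex _ A => A.symsF

/-- Naive substitution of the term `u` for the free occurrences of the variable `x`. -/
def Fm.subst (x : ℕ) (u : Tm) : Fm → Fm
  | .atom p ts => .atom p (ts.map (Tm.substT x u))
  | .neg A => .neg (Fm.subst x u A)
  | .or A B => .or (Fm.subst x u A) (Fm.subst x u B)
  | .and A B => .and (Fm.subst x u A) (Fm.subst x u B)
  | .all y A => if y = x then .all y A else .all y (Fm.subst x u A)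
  | .ex y A => if y = x then .ex y A else .ex y (Fm.subst x u A)

/-- Quantifier-freeness. -/
def Fm.qf : Fm → Prop
  | .atom _ _ => True
  | .neg A => A.qf
  | .or A B => A.qf ∧ B.qf
  | .and A B => A.qf ∧ B.qf
  | .all _ _ => False
  | .ex _ _ => False

def Fm.qfB : Fm → Bool
  | .atom _ _ => true
  | .neg A => A.qfB
  | .or A B => A.qfB && B.qfB
  | .and A B => A.qfB && B.qfB
  | .all _ _ => false
  | .ex _ _ => false

/-- A formula is over the base language. -/
def Fm.isBase (A : Fm) : Prop := ∀ p ∈ A.symsF, ∃ k : ℕ, p.1 = some (Sum.inl k)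

/-- Rectified: distinct binders, and bound variables distinct from free variables
(the tacit assumption of the paper: every occurrence of every variable is either
free or bound by a unique quantifier). -/
def Fm.rectified (A : Fm) : Prop :=
  A.boundVars.Nodup ∧ ∀ x ∈ A.boundVars, x ∉ A.freeVars

/-- Sentential (Boolean) evaluation, reading each atomic formula (a predicate symbol
together with its argument terms) as a propositional variable. -/
def Fm.sentEval (β : ℕ → List Tm → Bool) : Fm → Bool
  | .atom p ts => β p ts
  | .neg A => !(A.sentEval β)
  | .or A B => A.sentEval β || B.sentEval β
  | .and A B => A.sentEval β && B.sentEval β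
  | .all _ _ => false
  | .ex _ _ => false

/-- A sentential tautology: a quantifier-free formula that evaluates to true under
every Boolean valuation of its atoms. -/
def Fm.taut (A : Fm) : Prop := A.qf ∧ ∀ β : ℕ → List Tm → Bool, A.sentEval β = true

/-- An interpretation of the language on a domain `D`. -/
structure Interp (D : Type) where
  fns : FSym → List D → D
  prd : ℕ → List D → Prop

def Tm.eval {D : Type} (I : Interp D) (v : ℕ → D) : Tm → D
  | .var x => v x
  | .fn f ts => I.fns f (ts.attach.map fun ⟨t, _⟩ => Tm.eval I v t)

def Fm.holds {D : Type} (I : Interp D) (v : ℕ → D) : Fm → Prop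
  | .atom p ts => I.prd p (ts.map (Tm.eval I v))
  | .neg A => ¬ Fm.holds I v A
  | .or A B => Fm.holds I v A ∨ Fm.holds I v B
  | .and A B => Fm.holds I v A ∧ Fm.holds I v B
  | .all x A => ∀ d : D, Fm.holds I (Function.update v x d) A
  | .ex x A => ∃ d : D, Fm.holds I (Function.update v x d) A

/-- Validity: truth in every structure (nonempty domain) under every assignment. -/
def Fm.valid (A : Fm) : Prop :=
  ∀ (D : Type) (_ : Nonempty D) (I : Interp D) (v : ℕ → D), A.holds I v


/-- Alpha-equivalence: equality of formulas up to renaming of bound variables. -/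
inductive Alpha : Fm → Fm → Prop where
  | refl (A : Fm) : Alpha A A
  | symm {A B : Fm} : Alpha A B → Alpha B A
  | trans {A B C : Fm} : Alpha A B → Alpha B C → Alpha A C
  | negc {A B : Fm} : Alpha A B → Alpha (.neg A) (.neg B)
  | orc {A A' B B' : Fm} : Alpha A A' → Alpha B B' → Alpha (.or A B) (.or A' B')
  | andc {A A' B B' : Fm} : Alpha A A' → Alpha B B' → Alpha (.and A B) (.and A' B')
  | allc {A B : Fm} (x : ℕ) : Alpha A B → Alpha (.all x A) (.all x B)
  | exc {A B : Fm} (x : ℕ) : Alpha A B → Alpha (.ex x A) (.ex x B)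
  | allRename (x y : ℕ) (A : Fm) : y ∉ A.freeVars → y ∉ A.boundVars →
      Alpha (.all x A) (.all y (Fm.subst x (.var y) A))
  | exRename (x y : ℕ) (A : Fm) : y ∉ A.freeVars → y ∉ A.boundVars →
      Alpha (.ex x A) (.ex y (Fm.subst x (.var y) A))

/-- One-hole contexts `A[…]` in formulas. -/
inductive Ctx : Type where
  | hole : Ctx
  | negC : Ctx → Ctx
  | orL : Ctx → Fm → Ctx
  | orR : Fm → Ctx → Ctx
  | andL : Ctx → Fm → Ctx
  | andR : Fm → Ctx → Ctx
  | allC : ℕ → Ctx → Ctx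
  | exC : ℕ → Ctx → Ctx

def Ctx.fill : Ctx → Fm → Fm
  | .hole, H => H
  | .negC c, H => .neg (c.fill H)
  | .orL c B, H => .or (c.fill H) B
  | .orR B c, H => .or B (c.fill H)
  | .andL c B, H => .and (c.fill H) B
  | .andR B c, H => .and B (c.fill H)
  | .allC x c, H => .all x (c.fill H)
  | .exC x c, H => .ex x (c.fill H)

/-- `true` iff the hole is in the scope of an even number of negation symbols. -/
def Ctx.pol : Ctx → Bool
  | .hole => true
  | .negC c => !c.pol
  | .orL c _ => c.pol
  | .orR _ c => c.pol
  | .andL c _ => c.pol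
  | .andR _ c => c.pol
  | .allC _ c => c.pol
  | .exC _ c => c.pol

/-- The hole is accessible: not in the scope of any quantifier. -/
def Ctx.accessible : Ctx → Prop
  | .hole => True
  | .negC c => c.accessible
  | .orL c _ => c.accessible
  | .orR _ c => c.accessible
  | .andL c _ => c.accessible
  | .andR _ c => c.accessible
  | .allC _ _ => False
  | .exC _ _ => False

/-- Variables occurring free in the context (the hole contributing nothing). -/
def Ctx.freeVarsC : Ctx → List ℕ
  | .hole => []
  | .negC c => c.freeVarsC
  | .orL c B => c.freeVarsC ++ B.freeVars
  | .orR B c => B.freeVars ++ c.freeVarsC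
  | .andL c B => c.freeVarsC ++ B.freeVars
  | .andR B c => B.freeVars ++ c.freeVarsC
  | .allC x c => c.freeVarsC.filter (· ≠ x)
  | .exC x c => c.freeVarsC.filter (· ≠ x)

/-- `mkQ q x H` is `∃x.H` if `q = true`, and `∀x.H` if `q = false`.
A quantifier `mkQ q x` sitting in a context `c` is existentialoid iff `q = c.pol`
(i.e. `∃` under an even number of negations or `∀` under an odd number),
and universaloid iff `q = !c.pol`. -/
def mkQ (q : Bool) (x : ℕ) (H : Fm) : Fm := if q then .ex x H else .all x H

/-- Derivations in the modern version of Herbrand's modus-ponens-free calculus,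
from a start formula, recording the list of instance terms `t` used by the
applications of the generalized rule of γ-quantification. -/
inductive Deriv : Fm → Fm → List Tm → Prop where
  | refl (A : Fm) : Deriv A A []
  | gamma {B : Fm} {ts : List Tm} (c : Ctx) (q : Bool) (x : ℕ) (t : Tm) (H : Fm) :
      Deriv B (c.fill (Fm.subst x t H)) ts →
      c.accessible → q = c.pol → (∀ z ∈ t.varsT, z ∉ H.boundVars) →
      Deriv B (c.fill (mkQ q x H)) (ts ++ [t])
  | delta {B : Fm} {ts : List Tm} (c : Ctx) (q : Bool) (y : ℕ) (H : Fm) :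
      Deriv B (c.fill H) ts →
      c.accessible → q = !c.pol → y ∉ c.freeVarsC →
      Deriv B (c.fill (mkQ q y H)) ts
  | simp {B : Fm} {ts : List Tm} (c : Ctx) (H H' : Fm) :
      Deriv B (c.fill (if c.pol then Fm.or H H' else Fm.and H H')) ts →
      Alpha H H' →
      Deriv B (c.fill H) ts
  | alpha {B A A' : Fm} {ts : List Tm} : Deriv B A ts → Alpha A A' → Deriv B A' ts

/-- A single application of a generalized rule of γ- or δ-quantification. -/
inductive QStep : Fm → Fm → Prop where
  | gamma (c : Ctx) (q : Bool) (x : ℕ) (t : Tm) (H : Fm) :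
      c.accessible → q = c.pol → (∀ z ∈ t.varsT, z ∉ H.boundVars) →
      QStep (c.fill (Fm.subst x t H)) (c.fill (mkQ q x H))
  | delta (c : Ctx) (q : Bool) (y : ℕ) (H : Fm) :
      c.accessible → q = !c.pol → y ∉ c.freeVarsC →
      QStep (c.fill H) (c.fill (mkQ q y H))

/-- A single application of the generalized rule of γ-simplification:
simplification where `H` is of the form `Qy.C` with `Qy.` existentialoid. -/
inductive GSimpStep : Fm → Fm → Prop where
  | mk (c : Ctx) (y : ℕ) (C H' : Fm) :
      Alpha (mkQ c.pol y C) H' →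
      GSimpStep
        (c.fill (if c.pol then Fm.or (mkQ c.pol y C) H' else Fm.and (mkQ c.pol y C) H'))
        (c.fill (mkQ c.pol y C))


/-- The Skolem term `x*(y₁,…,yₘ)` for the removed universaloid variable `x`,
whose arguments are the variables of the existentialoid quantifiers in scope. -/
def skTm (x : ℕ) (γs : List ℕ) : Tm := .fn (some (Sum.inr x)) (γs.map Tm.var)

/-- Outer Skolemization: `b` is the polarity (`true` = an even number of negations
so far), `γs` the list of variables of the existentialoid quantifiers in whose
scope we are, in order. Universaloid quantifiers are removed and their variables
replaced by Skolem terms; existentialoid quantifiers are kept. -/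
def Fm.skolemize (b : Bool) (γs : List ℕ) : Fm → Fm
  | .atom p ts => .atom p ts
  | .neg A => .neg (A.skolemize (!b) γs)
  | .or A B => .or (A.skolemize b γs) (B.skolemize b γs)
  | .and A B => .and (A.skolemize b γs) (B.skolemize b γs)
  | .all x A => if b then Fm.subst x (skTm x γs) (A.skolemize b γs)
                else .all x (A.skolemize b (γs ++ [x]))
  | .ex x A => if b then .ex x (A.skolemize b (γs ++ [x]))
               else Fm.subst x (skTm x γs) (A.skolemize b γs)

/-- The outer Skolemized form of a formula. -/
def Fm.outerSk (A : Fm) : Fm := A.skolemize true []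

def falsum : Fm := .and (.atom 0 []) (.neg (.atom 0 []))
def verum : Fm := .or (.atom 0 []) (.neg (.atom 0 []))

def bigOr : List Fm → Fm
  | [] => falsum
  | [A] => A
  | A :: B :: rest => .or A (bigOr (B :: rest))

def bigAnd : List Fm → Fm
  | [] => verum
  | [A] => A
  | A :: B :: rest => .and A (bigAnd (B :: rest))

/-- All lists of length `k` over the given list. -/
def tuples : ℕ → List Tm → List (List Tm)
  | 0, _ => [[]]
  | k + 1, l => l.flatMap fun a => (tuples k l).map (a :: ·)

/-- The fresh constant `•` is included iff `F` contains neither constants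
nor free variables. -/
def Fm.allowBullet (F : Fm) : Bool :=
  F.freeVars.isEmpty && F.symsF.all (fun p => p.2 != 0)

/-- The champ fini `T_n(F)`: all terms of height `< n` built from the function
symbols (with their arities), constant symbols, and free variables of `F`
(with the fresh constant `•` added if `F` has neither constants nor free
variables).  `T_1(F) = ∅`. -/
def Fm.champTm (F : Fm) : ℕ → List Tm
  | 0 => []
  | 1 => []
  | n + 2 =>
      F.freeVars.map Tm.var
        ++ (if F.allowBullet then [Tm.fn none []] else [])
        ++ F.symsF.flatMap (fun p => (tuples p.2 (F.champTm (n + 1))).map (Tm.fn p.1))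

/-- The expansion `A^T` of `A` w.r.t. a finite set (list) of terms `T`. -/
def Fm.expandL (T : List Tm) : Fm → Fm
  | .atom p ts => .atom p ts
  | .neg A => .neg (A.expandL T)
  | .or A B => .or (A.expandL T) (B.expandL T)
  | .and A B => .and (A.expandL T) (B.expandL T)
  | .ex x A => bigOr (T.map fun t => Fm.subst x t (A.expandL T))
  | .all x A => bigAnd (T.map fun t => Fm.subst x t (A.expandL T))

/-- Property C of order `n` (for `n ≥ 1`): letting `F` be the outer Skolemized
form of `A`, for `n = 1` the formula `F` itself must be a sentential tautology,
and for `n > 1` the expansion `F^{T_n(F)}` must be a sentential tautology. -/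
def Fm.hasC (A : Fm) (n : ℕ) : Prop :=
  (if n = 1 then A.outerSk else Fm.expandL (A.outerSk.champTm n) A.outerSk).taut


/-- Reading every term that starts with a Skolem function symbol as an atomic
variable, via an injective coding `code` of terms into variable names. -/
def Tm.readSk (code : Tm → ℕ) : Tm → Tm
  | .var x => .var x
  | .fn (some (Sum.inr k)) ts => .var (code (.fn (some (Sum.inr k)) ts))
  | .fn (some (Sum.inl k)) ts => .fn (some (Sum.inl k)) (ts.attach.map fun ⟨t, _⟩ => Tm.readSk code t)
  | .fn none ts => .fn none (ts.attach.map fun ⟨t, _⟩ => Tm.readSk code t)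

def Fm.readSk (code : Tm → ℕ) : Fm → Fm
  | .atom p ts => .atom p (ts.map (Tm.readSk code))
  | .neg A => .neg (A.readSk code)
  | .or A B => .or (A.readSk code) (B.readSk code)
  | .and A B => .and (A.readSk code) (B.readSk code)
  | .all x A => .all x (A.readSk code)
  | .ex x A => .ex x (A.readSk code)

/-- The atoms (predicate symbol with argument terms) occurring in a formula. -/
def Fm.atoms : Fm → List (ℕ × List Tm)
  | .atom p ts => [(p, ts)]
  | .neg A => A.atoms
  | .or A B => A.atoms ++ B.atoms
  | .and A B => A.atoms ++ B.atoms
  | .all _ A => A.atoms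
  | .ex _ A => A.atoms

/-- All Boolean valuations of a finite list of atoms (all other atoms `false`). -/
def valuations : List (ℕ × List Tm) → List (ℕ → List Tm → Bool)
  | [] => [fun _ _ => false]
  | a :: rest =>
      (valuations rest).flatMap fun β =>
        [fun p ts => if p == a.1 && Tm.beqList ts a.2 then true else β p ts,
         fun p ts => if p == a.1 && Tm.beqList ts a.2 then false else β p ts]

/-- Computable check for sentential tautology. -/
def Fm.tautB (A : Fm) : Bool :=
  A.qfB && (valuations A.atoms).all fun β => A.sentEval β

/-- Computable check for Property C of order `n`. -/
def Fm.hasCB (A : Fm) (n : ℕ) : Bool :=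
  (if n = 1 then A.outerSk else Fm.expandL (A.outerSk.champTm n) A.outerSk).tautB

/-- The six rules of passage, read from left to right. -/
inductive PassEq : Fm → Fm → Prop where
  | p1 (x : ℕ) (A : Fm) : PassEq (.neg (.all x A)) (.ex x (.neg A))
  | p2 (x : ℕ) (A : Fm) : PassEq (.neg (.ex x A)) (.all x (.neg A))
  | p3 (x : ℕ) (A B : Fm) : x ∉ B.freeVars → PassEq (.or (.all x A) B) (.all x (.or A B))
  | p4 (x : ℕ) (A B : Fm) : x ∉ B.freeVars → PassEq (.or B (.all x A)) (.all x (.or B A))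
  | p5 (x : ℕ) (A B : Fm) : x ∉ B.freeVars → PassEq (.or (.ex x A) B) (.ex x (.or A B))
  | p6 (x : ℕ) (A B : Fm) : x ∉ B.freeVars → PassEq (.or B (.ex x A)) (.ex x (.or B A))

/-- A single inference step of Herbrand's historic modus-ponens-free calculus:
the shallow rules of γ- and δ-quantification (empty context), the generalized
(deep) rule of simplification, the twelve (deep) rules of passage, and renaming
of bound variables. -/
inductive HStep : Fm → Fm → Prop where
  | gammaSh (x : ℕ) (t : Tm) (H : Fm) :
      (∀ z ∈ t.varsT, z ∉ H.boundVars) →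
      HStep (Fm.subst x t H) (.ex x H)
  | deltaSh (y : ℕ) (H : Fm) :
      HStep H (.all y H)
  | simp (c : Ctx) (H H' : Fm) :
      Alpha H H' →
      HStep (c.fill (if c.pol then Fm.or H H' else Fm.and H H')) (c.fill H)
  | passage (c : Ctx) (L R : Fm) : PassEq L R → HStep (c.fill L) (c.fill R)
  | passageRev (c : Ctx) (L R : Fm) : PassEq L R → HStep (c.fill R) (c.fill L)
  | alpha (A B : Fm) : Alpha A B → HStep A B


/-- `∃x₁.…∃x_k.G`. -/
def bigEx : List ℕ → Fm → Fm
  | [], G => G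
  | x :: xs, G => .ex x (bigEx xs G)

/-- Substitution of the terms `ts` for the (distinct) variables `xs`; for
variable-free terms this is the parallel substitution `G{x₁↦t₁,…,x_k↦t_k}`. -/
def Fm.substList : List ℕ → List Tm → Fm → Fm
  | [], _, G => G
  | _, [], G => G
  | x :: xs, t :: ts, G => Fm.substList xs ts (Fm.subst x t G)

/-! If `∃x₁.…∃x_k.G` is valid, it holds in the Herbrand model of every valuation `β` of
the atoms, whose domain is the set of closed base terms; a witness there is a tuple of terms
whose instance of `G` is true under `β`. So the open sets `{β | G{x̄↦t̄} is true under β}`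
cover the compact space of all valuations, and finitely many of them already do: their
disjunction is a sentential tautology. Conversely, in any structure, the disjunct made true
by the valuation the structure induces on atoms supplies the witnesses. -/

@[induction_eliminator]
theorem Tm.induction {P : Tm → Prop} (var : ∀ x, P (.var x))
    (fn : ∀ f ts, (∀ t ∈ ts, P t) → P (.fn f ts)) (t : Tm) : P t :=
  Tm.rec (motive_2 := fun ts => ∀ t ∈ ts, P t) var fn (by simp)
    (fun _ _ h ih => List.forall_mem_cons.mpr ⟨h, ih⟩) t

theorem foldr_attach_append {α : Type} (g : Tm → List α) (ts : List Tm) :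
    ts.attach.foldr (fun t l => g t.1 ++ l) [] = ts.flatMap g := by
  induction ts <;> simp_all

@[simp]
theorem Tm.varsT_fn (f : FSym) (ts : List Tm) : (Tm.fn f ts).varsT = ts.flatMap Tm.varsT := by
  rw [Tm.varsT, foldr_attach_append]

@[simp]
theorem Tm.symsT_fn (f : FSym) (ts : List Tm) :
    (Tm.fn f ts).symsT = (f, ts.length) :: ts.flatMap Tm.symsT := by
  rw [Tm.symsT, foldr_attach_append]

@[simp]
theorem Tm.substT_fn (x : ℕ) (u : Tm) (f : FSym) (ts : List Tm) :
    Tm.substT x u (.fn f ts) = .fn f (ts.map (Tm.substT x u)) := by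
  simp [Tm.substT, List.map_subtype]

@[simp]
theorem Tm.eval_fn {D : Type} (I : Interp D) (v : ℕ → D) (f : FSym) (ts : List Tm) :
    (Tm.fn f ts).eval I v = I.fns f (ts.map (Tm.eval I v)) := by
  simp [Tm.eval, List.map_subtype]

theorem Tm.eval_substT {D : Type} (I : Interp D) (v : ℕ → D) (x : ℕ) (u t : Tm) :
    (Tm.substT x u t).eval I v = t.eval I (Function.update v x (u.eval I v)) := by
  induction t with
  | var y => by_cases h : y = x <;> simp [Tm.substT, Tm.eval, h]
  | fn f ts ih =>
    simp only [Tm.substT_fn, Tm.eval_fn, List.map_map]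
    exact congrArg _ (List.map_congr_left ih)

theorem Tm.eval_congr {D : Type} (I : Interp D) {v w : ℕ → D} (t : Tm)
    (h : ∀ z ∈ t.varsT, v z = w z) : t.eval I v = t.eval I w := by
  induction t with
  | var y => simpa [Tm.eval, Tm.varsT] using h
  | fn f ts ih =>
    simp only [Tm.varsT_fn, List.mem_flatMap] at h
    simp only [Tm.eval_fn]
    congr 1
    exact List.map_congr_left fun t ht => ih t ht fun z hz => h z ⟨t, ht, hz⟩

theorem Tm.eval_of_varsT_eq_nil {D : Type} (I : Interp D) (v w : ℕ → D) {t : Tm}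
    (ht : t.varsT = []) : t.eval I v = t.eval I w :=
  t.eval_congr I (by simp [ht])

theorem Tm.mem_varsT_substT {x z : ℕ} {u t : Tm} (hz : z ∈ (Tm.substT x u t).varsT) :
    (z ∈ t.varsT ∧ z ≠ x) ∨ z ∈ u.varsT := by
  induction t with
  | var y => by_cases h : y = x <;> simp_all [Tm.substT, Tm.varsT]
  | fn f ts ih =>
    simp only [Tm.substT_fn, Tm.varsT_fn, List.mem_flatMap, List.mem_map] at hz ⊢
    obtain ⟨_, ⟨t, ht, rfl⟩, hz⟩ := hz
    exact (ih t ht hz).imp_left fun h => ⟨⟨t, ht, h.1⟩, h.2⟩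

theorem Tm.mem_symsT_substT {x : ℕ} {p : FSym × ℕ} {u t : Tm}
    (hp : p ∈ (Tm.substT x u t).symsT) : p ∈ t.symsT ∨ p ∈ u.symsT := by
  induction t with
  | var y => by_cases h : y = x <;> simp_all [Tm.substT, Tm.symsT]
  | fn f ts ih =>
    simp only [Tm.substT_fn, Tm.symsT_fn, List.mem_cons, List.mem_flatMap, List.mem_map,
      List.length_map] at hp ⊢
    obtain hp | ⟨_, ⟨t, ht, rfl⟩, hp⟩ := hp
    · exact .inl (.inl hp)
    · exact (ih t ht hp).imp_left fun h => .inr ⟨t, ht, h⟩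

theorem Fm.qf_subst {x : ℕ} {u : Tm} {A : Fm} (hA : A.qf) : (A.subst x u).qf := by
  induction A with
  | atom => trivial
  | neg A ih => exact ih hA
  | or A B ihA ihB | and A B ihA ihB => exact ⟨ihA hA.1, ihB hA.2⟩
  | all | ex => exact hA.elim

theorem Fm.mem_freeVars_subst {x z : ℕ} {u : Tm} {A : Fm} (hz : z ∈ (A.subst x u).freeVars) :
    (z ∈ A.freeVars ∧ z ≠ x) ∨ z ∈ u.varsT := by
  induction A with
  | atom p ts =>
    simp only [Fm.subst, Fm.freeVars, List.mem_flatMap, List.mem_map] at hz ⊢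
    obtain ⟨_, ⟨t, ht, rfl⟩, hz⟩ := hz
    exact (Tm.mem_varsT_substT hz).imp_left fun h => ⟨⟨t, ht, h.1⟩, h.2⟩
  | neg A ih => exact ih hz
  | or A B ihA ihB | and A B ihA ihB =>
    simp only [Fm.subst, Fm.freeVars, List.mem_append] at hz ⊢
    rcases hz with hz | hz
    · exact (ihA hz).imp_left fun h => ⟨.inl h.1, h.2⟩
    · exact (ihB hz).imp_left fun h => ⟨.inr h.1, h.2⟩
  | all y A ih | ex y A ih =>
    by_cases hy : y = x
    · subst hy
      simp only [Fm.subst, if_true, Fm.freeVars, List.mem_filter, decide_eq_true_eq] at hz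
      exact .inl ⟨by simpa [Fm.freeVars] using hz, hz.2⟩
    · simp only [Fm.subst, hy, if_false, Fm.freeVars, List.mem_filter, decide_eq_true_eq] at hz ⊢
      exact (ih hz.1).imp_left fun h => ⟨⟨h.1, hz.2⟩, h.2⟩

theorem Fm.mem_symsF_subst {x : ℕ} {p : FSym × ℕ} {u : Tm} {A : Fm}
    (hp : p ∈ (A.subst x u).symsF) : p ∈ A.symsF ∨ p ∈ u.symsT := by
  induction A with
  | atom q ts =>
    simp only [Fm.subst, Fm.symsF, List.mem_flatMap, List.mem_map] at hp ⊢
    obtain ⟨_, ⟨t, ht, rfl⟩, hp⟩ := hp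
    exact (Tm.mem_symsT_substT hp).imp_left fun h => ⟨t, ht, h⟩
  | neg A ih => exact ih hp
  | or A B ihA ihB | and A B ihA ihB =>
    simp only [Fm.subst, Fm.symsF, List.mem_append] at hp ⊢
    rcases hp with hp | hp
    · exact (ihA hp).imp_left .inl
    · exact (ihB hp).imp_left .inr
  | all y A ih | ex y A ih =>
    by_cases hy : y = x
    · simp only [Fm.subst, hy, if_true] at hp
      exact .inl hp
    · simp only [Fm.subst, hy, if_false, Fm.symsF] at hp ⊢
      exact ih hp

theorem Fm.holds_subst {D : Type} (I : Interp D) (v : ℕ → D) (x : ℕ) (u : Tm) {A : Fm}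
    (hA : A.qf) : (A.subst x u).holds I v ↔ A.holds I (Function.update v x (u.eval I v)) := by
  induction A with
  | atom p ts => simp [Fm.subst, Fm.holds, Function.comp_def, Tm.eval_substT]
  | neg A ih => simp only [Fm.subst, Fm.holds, ih hA]
  | or A B ihA ihB | and A B ihA ihB => simp only [Fm.subst, Fm.holds, ihA hA.1, ihB hA.2]
  | all | ex => exact hA.elim

open Classical in
noncomputable def Interp.valuation {D : Type} (I : Interp D) (v : ℕ → D) (p : ℕ)
    (ts : List Tm) : Bool :=
  decide (I.prd p (ts.map (Tm.eval I v)))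

theorem Fm.holds_iff_sentEval {D : Type} (I : Interp D) (v : ℕ → D) {A : Fm} (hA : A.qf) :
    A.holds I v ↔ A.sentEval (I.valuation v) = true := by
  induction A with
  | atom => simp [Fm.holds, Fm.sentEval, Interp.valuation]
  | neg A ih => simp [Fm.holds, Fm.sentEval, ih hA]
  | or A B ihA ihB | and A B ihA ihB => simp [Fm.holds, Fm.sentEval, ihA hA.1, ihB hA.2]
  | all | ex => exact hA.elim

theorem qf_bigOr {L : List Fm} (h : ∀ A ∈ L, A.qf) : (bigOr L).qf := by
  induction L using bigOr.induct with
  | case1 => exact ⟨trivial, trivial⟩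
  | case2 A => exact h A (by simp)
  | case3 A B rest ih =>
    simp only [List.mem_cons, forall_eq_or_imp] at h
    exact ⟨h.1, ih (by simpa using h.2)⟩

theorem sentEval_bigOr (β : ℕ → List Tm → Bool) (L : List Fm) :
    (bigOr L).sentEval β = true ↔ ∃ A ∈ L, A.sentEval β = true := by
  induction L using bigOr.induct with
  | case1 => simp [bigOr, falsum, Fm.sentEval]
  | case2 A => simp [bigOr]
  | case3 A B rest ih =>
    rw [bigOr, Fm.sentEval, Bool.or_eq_true, ih, List.exists_mem_cons_iff _ A]

def updateList {D : Type} (v : ℕ → D) : List ℕ → List D → (ℕ → D)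
  | x :: xs, d :: ds => updateList (Function.update v x d) xs ds
  | _, _ => v

theorem update_updateList {D : Type} {x : ℕ} {xs : List ℕ} (hx : x ∉ xs) (d : D)
    (v : ℕ → D) (ds : List D) :
    Function.update (updateList v xs ds) x d = updateList (Function.update v x d) xs ds := by
  induction xs generalizing v ds with
  | nil => rfl
  | cons y xs ih =>
    cases ds with
    | nil => rfl
    | cons e ds =>
      simp only [List.mem_cons, not_or] at hx
      rw [updateList, updateList, ih hx.2, Function.update_comm hx.1]

theorem holds_bigEx {D : Type} (I : Interp D) (G : Fm) (xs : List ℕ) (v : ℕ → D) :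
    (bigEx xs G).holds I v ↔
      ∃ ds : List D, ds.length = xs.length ∧ G.holds I (updateList v xs ds) := by
  induction xs generalizing v with
  | nil => simp [bigEx, updateList]
  | cons x xs ih =>
    simp only [bigEx, Fm.holds, ih, List.length_cons]
    constructor
    · rintro ⟨d, ds, hlen, h⟩
      exact ⟨d :: ds, by rw [List.length_cons, hlen], h⟩
    · rintro ⟨_ | ⟨d, ds⟩, hlen, h⟩
      · simp at hlen
      · exact ⟨d, ds, by simpa using hlen, h⟩

theorem Fm.qf_substList (xs : List ℕ) (ts : List Tm) {G : Fm} (hG : G.qf) :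
    (G.substList xs ts).qf := by
  induction xs, ts, G using Fm.substList.induct with
  | case1 | case2 => simpa [Fm.substList] using hG
  | case3 x xs t ts G ih => exact ih (Fm.qf_subst hG)

theorem Fm.holds_substList {D : Type} (I : Interp D) (v : ℕ → D) {xs : List ℕ} {ts : List Tm}
    {G : Fm} (hnd : xs.Nodup) (hts : ∀ t ∈ ts, t.varsT = []) (hG : G.qf) :
    (G.substList xs ts).holds I v ↔ G.holds I (updateList v xs (ts.map (Tm.eval I v))) := by
  induction xs, ts, G using Fm.substList.induct with
  | case1 | case2 => cases ‹List _› <;> rfl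
  | case3 x xs t ts G ih =>
    simp only [List.nodup_cons, List.forall_mem_cons] at hnd hts
    rw [Fm.substList, ih hnd.2 hts.2 (Fm.qf_subst hG), Fm.holds_subst _ _ _ _ hG,
      Tm.eval_of_varsT_eq_nil I _ v hts.1, List.map_cons, updateList,
      update_updateList hnd.1]

theorem Fm.mem_freeVars_substList {xs : List ℕ} {ts : List Tm} {G : Fm} {z : ℕ}
    (hts : ∀ t ∈ ts, t.varsT = []) (hlen : ts.length = xs.length)
    (hz : z ∈ (G.substList xs ts).freeVars) : z ∈ G.freeVars ∧ z ∉ xs := by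
  induction xs, ts, G using Fm.substList.induct with
  | case1 => exact ⟨by simpa [Fm.substList] using hz, List.not_mem_nil⟩
  | case2 xs G hxs => exact absurd (List.length_eq_zero_iff.mp hlen.symm) hxs
  | case3 x xs t ts G ih =>
    simp only [List.forall_mem_cons, List.length_cons, add_left_inj] at hts hlen
    obtain ⟨hzG, hzxs⟩ := ih hts.2 hlen hz
    rcases Fm.mem_freeVars_subst hzG with ⟨hz, hzx⟩ | hzt
    · exact ⟨hz, by simp [hzx, hzxs]⟩
    · simp [hts.1] at hzt

theorem Fm.mem_symsF_substList {xs : List ℕ} {ts : List Tm} {G : Fm} {p : FSym × ℕ}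
    (hp : p ∈ (G.substList xs ts).symsF) : p ∈ G.symsF ∨ ∃ t ∈ ts, p ∈ t.symsT := by
  induction xs, ts, G using Fm.substList.induct with
  | case1 | case2 => exact .inl (by simpa [Fm.substList] using hp)
  | case3 x xs t ts G ih =>
    rcases ih hp with hp | ⟨u, hu, hp⟩
    · exact (Fm.mem_symsF_subst hp).imp_right fun h => ⟨t, List.mem_cons_self, h⟩
    · exact .inr ⟨u, List.mem_cons_of_mem _ hu, hp⟩

def Tm.IsClosedBase (t : Tm) : Prop := t.varsT = [] ∧ t.isBaseT

theorem Tm.isClosedBase_fn {f : FSym} {ts : List Tm} :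
    (Tm.fn f ts).IsClosedBase ↔ (∃ k, f = some (.inl k)) ∧ ∀ t ∈ ts, t.IsClosedBase := by
  simp only [Tm.IsClosedBase, Tm.isBaseT, Tm.varsT_fn, Tm.symsT_fn, List.flatMap_eq_nil_iff,
    List.forall_mem_cons, List.mem_flatMap, forall_exists_index, and_imp]
  grind

abbrev ClosedBaseTm : Type := {t : Tm // t.IsClosedBase}

instance : Inhabited ClosedBaseTm :=
  ⟨⟨.fn (some (.inl 0)) [], Tm.isClosedBase_fn.mpr ⟨⟨0, rfl⟩, by simp⟩⟩⟩

open Classical in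
/-- Closed base terms denote themselves; non-base function symbols, which occur in no closed
base term, get a junk value. -/
noncomputable def herbrandInterp (β : ℕ → List Tm → Bool) : Interp ClosedBaseTm where
  fns f ds := if h : ∃ k, f = some (.inl k) then
      ⟨.fn f (ds.map Subtype.val), Tm.isClosedBase_fn.mpr ⟨h, by simp +contextual⟩⟩
    else default
  prd p ds := β p (ds.map Subtype.val) = true

theorem herbrandInterp_fns_val (β : ℕ → List Tm → Bool) {f : FSym}
    (hf : ∃ k, f = some (.inl k)) (ds : List ClosedBaseTm) :
    ((herbrandInterp β).fns f ds).val = .fn f (ds.map Subtype.val) := by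
  simp [herbrandInterp, hf]

theorem eval_herbrandInterp (β : ℕ → List Tm → Bool) (v : ℕ → ClosedBaseTm) {t : Tm}
    (ht : t.IsClosedBase) : (t.eval (herbrandInterp β) v).val = t := by
  induction t with
  | var x => simp [Tm.IsClosedBase, Tm.varsT] at ht
  | fn f ts ih =>
    obtain ⟨hf, hts⟩ := Tm.isClosedBase_fn.mp ht
    rw [Tm.eval_fn, herbrandInterp_fns_val β hf, List.map_map]
    conv_rhs => rw [← List.map_id ts]
    exact congrArg _ (List.map_congr_left fun t ht => ih t ht (hts t ht))

theorem holds_herbrandInterp (β : ℕ → List Tm → Bool) (v : ℕ → ClosedBaseTm) {A : Fm}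
    (hA : A.qf) (hfv : A.freeVars = []) (hb : A.isBase) :
    A.holds (herbrandInterp β) v ↔ A.sentEval β = true := by
  induction A with
  | atom p ts =>
    have hts : ∀ t ∈ ts, (t.eval (herbrandInterp β) v).val = t := fun t ht =>
      eval_herbrandInterp β v ⟨List.flatMap_eq_nil_iff.mp hfv t ht,
        fun q hq => hb q (List.mem_flatMap.mpr ⟨t, ht, hq⟩)⟩
    change β p ((ts.map _).map Subtype.val) = true ↔ β p ts = true
    rw [List.map_map, Function.comp_def, List.map_congr_left hts, List.map_id']
  | neg A ih => simp [Fm.holds, Fm.sentEval, ih hA hfv hb]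
  | or A B ihA ihB | and A B ihA ihB =>
    simp only [Fm.freeVars, List.append_eq_nil_iff] at hfv
    simp only [Fm.isBase, Fm.symsF, List.mem_append, or_imp, forall_and] at hb
    simp [Fm.holds, Fm.sentEval, ihA hA.1 hfv.1 hb.1, ihB hA.2 hfv.2 hb.2]
  | all | ex => exact hA.elim

theorem Fm.continuous_sentEval (A : Fm) :
    Continuous fun β : ℕ → List Tm → Bool => A.sentEval β := by
  induction A with
  | atom p ts => exact (continuous_apply ts).comp (continuous_apply p)
  | neg A ih => exact continuous_of_discreteTopology.comp ih
  | or A B ihA ihB =>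
    exact (continuous_of_discreteTopology (f := fun b : Bool × Bool => b.1 || b.2)).comp
      (ihA.prodMk ihB)
  | and A B ihA ihB =>
    exact (continuous_of_discreteTopology (f := fun b : Bool × Bool => b.1 && b.2)).comp
      (ihA.prodMk ihB)
  | all | ex => exact continuous_const

theorem exists_finset_forall_exists_sentEval {ι : Type*} (F : ι → Fm)
    (h : ∀ β, ∃ i, (F i).sentEval β = true) :
    ∃ s : Finset ι, ∀ β, ∃ i ∈ s, (F i).sentEval β = true := by
  obtain ⟨s, hs⟩ := isCompact_univ.elim_finite_subcover
    (fun i => {β : ℕ → List Tm → Bool | (F i).sentEval β = true})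
    (fun i => isOpen_discrete {true} |>.preimage (F i).continuous_sentEval)
    (fun β _ => Set.mem_iUnion.mpr (h β))
  exact ⟨s, fun β => by simpa using hs (Set.mem_univ β)⟩

theorem exists_sentEval_substList_of_valid {G : Fm} {xs : List ℕ} (hqf : G.qf) (hnd : xs.Nodup)
    (hfv : ∀ z ∈ G.freeVars, z ∈ xs) (hbase : G.isBase) (hval : (bigEx xs G).valid)
    (β : ℕ → List Tm → Bool) :
    ∃ ds : {ds : List ClosedBaseTm // ds.length = xs.length},
      (G.substList xs (ds.1.map Subtype.val)).sentEval β = true := by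
  obtain ⟨ds, hlen, hG⟩ :=
    (holds_bigEx _ G xs default).mp (hval _ ⟨default⟩ (herbrandInterp β) default)
  have hds : ∀ t ∈ ds.map Subtype.val, t.IsClosedBase := by simp +contextual
  have heval : (ds.map Subtype.val).map (Tm.eval (herbrandInterp β) default) = ds := by
    rw [List.map_map]
    exact List.map_id'' (fun d => Subtype.ext (eval_herbrandInterp β _ d.2)) ds
  refine ⟨⟨ds, hlen⟩,
    (holds_herbrandInterp β default (Fm.qf_substList _ _ hqf) ?_ ?_).mp ?_⟩
  · refine List.eq_nil_iff_forall_not_mem.mpr fun z hz => ?_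
    have := Fm.mem_freeVars_substList (fun t ht => (hds t ht).1) (by simp [hlen]) hz
    exact this.2 (hfv z this.1)
  · intro p hp
    rcases Fm.mem_symsF_substList hp with hp | ⟨t, ht, hp⟩
    · exact hbase p hp
    · exact (hds t ht).2 p hp
  · rwa [Fm.holds_substList _ _ hnd (fun t ht => (hds t ht).1) hqf, heval]

theorem valid_bigEx_of_forall_sentEval_bigOr {G : Fm} {xs : List ℕ} (hqf : G.qf)
    (hnd : xs.Nodup) {subs : List (List Tm)}
    (hsubs : ∀ tup ∈ subs, tup.length = xs.length ∧ ∀ t ∈ tup, t.varsT = [])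
    (htaut : ∀ β, (bigOr (subs.map fun tup => G.substList xs tup)).sentEval β = true) :
    (bigEx xs G).valid := by
  intro D _ I v
  obtain ⟨_, hA, htrue⟩ := (sentEval_bigOr _ _).mp (htaut (I.valuation v))
  obtain ⟨tup, htup, rfl⟩ := List.mem_map.mp hA
  obtain ⟨hlen, hcl⟩ := hsubs tup htup
  refine (holds_bigEx I G xs v).mpr ⟨tup.map (Tm.eval I v), by simp [hlen], ?_⟩
  rw [← Fm.holds_substList I v hnd hcl hqf]
  exact (Fm.holds_iff_sentEval I v (Fm.qf_substList _ _ hqf)).mpr htrue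

/-- **Herbrand's theorem for prenex existential formulas.**
For a quantifier-free `G` with free variables among the distinct `x₁,…,x_k`
(over the base language, in which variable-free terms exist), the formula
`∃x₁.…∃x_k.G` is valid iff there are finitely many `k`-tuples of variable-free
terms such that the disjunction of the corresponding instances of `G` is
sententially valid. -/
theorem herbrand_prenex_existential (G : Fm) (xs : List ℕ)
    (hqf : G.qf) (hnd : xs.Nodup) (hfv : ∀ z ∈ G.freeVars, z ∈ xs)
    (hbase : G.isBase) :
    (bigEx xs G).valid ↔
      ∃ subs : List (List Tm), subs ≠ [] ∧
        (∀ tup ∈ subs, tup.length = xs.length ∧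
          ∀ t ∈ tup, Tm.varsT t = [] ∧ t.isBaseT) ∧
        (bigOr (subs.map fun tup => Fm.substList xs tup G)).taut := by
  constructor
  · intro hval
    obtain ⟨s, hs⟩ := exists_finset_forall_exists_sentEval _
      (exists_sentEval_substList_of_valid hqf hnd hfv hbase hval)
    set subs := s.toList.map (·.1.map Subtype.val)
    have hmem {ds} (hds : ds ∈ s) : ds.1.map Subtype.val ∈ subs :=
      List.mem_map_of_mem (Finset.mem_toList.mpr hds)
    refine ⟨subs, ?_, ?_, qf_bigOr ?_, fun β => ?_⟩
    · obtain ⟨ds, hds, -⟩ := hs fun _ _ => false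
      exact List.ne_nil_of_mem (hmem hds)
    · simp only [subs, List.mem_map, Finset.mem_toList]
      rintro _ ⟨ds, -, rfl⟩
      refine ⟨by simp [ds.2], fun t ht => ?_⟩
      obtain ⟨d, -, rfl⟩ := List.mem_map.mp ht
      exact d.2
    · simp only [List.mem_map]
      rintro _ ⟨tup, -, rfl⟩
      exact Fm.qf_substList _ _ hqf
    · obtain ⟨ds, hds, h⟩ := hs β
      exact (sentEval_bigOr β _).mpr ⟨_, List.mem_map_of_mem (hmem hds), h⟩
  · rintro ⟨subs, -, hsubs, -, htaut⟩
    refine valid_bigEx_of_forall_sentEval_bigOr hqf hnd (fun tup htup => ?_) htaut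
    exact ⟨(hsubs tup htup).1, fun t ht => ((hsubs tup htup).2 t ht).1⟩

end Herbrand
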